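/- arXiv:0904.2543 — 5 statements merged into one kernel-verified Lean document; each statement's English description precedes it below -/
import Mathlib

section
/- For every integer m the following exchange relations hold in K: w · x(2m) = x(2m−1) + x(2m+1); z · x(2m+1) = x(2m) + x(2m+2); x(2m−2) · x(2m+2) = x(2m)² + z; and x(2m−1) · x(2m+3) = x(2m+1)² + w. -/
noncomputable section

abbrev Kf : Type := FractionRing (MvPolynomial (Fin 3) ℚ)

def X1 : Kf := algebraMap (MvPolynomial (Fin 3) ℚ) Kf (MvPolynomial.X 0)
def X2 : Kf := algebraMap (MvPolynomial (Fin 3) ℚ) Kf (MvPolynomial.X 1)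
def X3 : Kf := algebraMap (MvPolynomial (Fin 3) ℚ) Kf (MvPolynomial.X 2)

theorem stmt0 (x : ℤ → Kf)
    (h1 : x 1 = X1) (h2 : x 2 = X2) (h3 : x 3 = X3)
    (hne : ∀ m : ℤ, x m ≠ 0)
    (hrec : ∀ m : ℤ, x m * x (m + 3) = x (m + 1) * x (m + 2) + 1)
    (w z : Kf)
    (hw : w = (X1 + X3) / X2)
    (hz : z = (X1 * X2 + 1 + X2 * X3) / (X1 * X3)) :
    ∀ m : ℤ,
      w * x (2 * m) = x (2 * m - 1) + x (2 * m + 1) ∧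
      z * x (2 * m + 1) = x (2 * m) + x (2 * m + 2) ∧
      x (2 * m - 2) * x (2 * m + 2) = (x (2 * m)) ^ 2 + z ∧
      x (2 * m - 1) * x (2 * m + 3) = (x (2 * m + 1)) ^ 2 + w := by
  have hX1 : X1 ≠ 0 := h1 ▸ hne 1
  have hX2 : X2 ≠ 0 := h2 ▸ hne 2
  have hX3 : X3 ≠ 0 := h3 ▸ hne 3
  -- the 2-step invariance of r_m = (x m + x (m+2)) / x (m+1), cross-multiplied
  have step : ∀ m : ℤ, x (m+3) * (x m + x (m+2)) = x (m+1) * (x (m+2) + x (m+4)) := by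
    intro m
    have H1 := hrec m
    have H2 := hrec (m+1)
    rw [show m+1+3 = m+4 from by ring, show m+1+1 = m+2 from by ring,
        show m+1+2 = m+3 from by ring] at H2
    linear_combination H1 - H2
  have W : ∀ k : ℤ, X2 * (x (2*k - 1) + x (2*k + 1)) = (X1 + X3) * x (2*k) := by
    intro k
    induction k using Int.induction_on with
    | zero =>
      have H0 := hrec 0
      have Hm1 := hrec (-1)
      norm_num at H0 Hm1 ⊢
      rw [← h1, ← h2, ← h3]
      linear_combination Hm1 - H0
    | succ k ih =>
      have S := step (2*(k:ℤ) - 1)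
      rw [show 2*(k:ℤ)-1+3 = 2*(k:ℤ)+2 from by ring, show 2*(k:ℤ)-1+2 = 2*(k:ℤ)+1 from by ring,
          show 2*(k:ℤ)-1+1 = 2*(k:ℤ) from by ring, show 2*(k:ℤ)-1+4 = 2*(k:ℤ)+3 from by ring] at S
      rw [show 2*((k:ℤ)+1)-1 = 2*(k:ℤ)+1 from by ring, show 2*((k:ℤ)+1)+1 = 2*(k:ℤ)+3 from by ring,
          show 2*((k:ℤ)+1) = 2*(k:ℤ)+2 from by ring]
      apply mul_left_cancel₀ (hne (2*(k:ℤ)))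
      linear_combination x (2*(k:ℤ)+2) * ih - X2 * S
    | pred k ih =>
      have S := step (-2*(k:ℤ) - 3)
      rw [show -2*(k:ℤ)-3+3 = -2*(k:ℤ) from by ring, show -2*(k:ℤ)-3+2 = -2*(k:ℤ)-1 from by ring,
          show -2*(k:ℤ)-3+1 = -2*(k:ℤ)-2 from by ring, show -2*(k:ℤ)-3+4 = -2*(k:ℤ)+1 from by ring] at S
      rw [show 2*(-(k:ℤ)-1)-1 = -2*(k:ℤ)-3 from by ring, show 2*(-(k:ℤ)-1)+1 = -2*(k:ℤ)-1 from by ring,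
          show 2*(-(k:ℤ)-1) = -2*(k:ℤ)-2 from by ring]
      rw [show 2*(-(k:ℤ))-1 = -2*(k:ℤ)-1 from by ring, show 2*(-(k:ℤ))+1 = -2*(k:ℤ)+1 from by ring,
          show 2*(-(k:ℤ)) = -2*(k:ℤ) from by ring] at ih
      apply mul_left_cancel₀ (hne (-2*(k:ℤ)))
      linear_combination X2 * S + x (-2*(k:ℤ)-2) * ih
  have Z : ∀ k : ℤ, (X1*X3) * (x (2*k) + x (2*k+2)) = (X1*X2 + 1 + X2*X3) * x (2*k+1) := by
    intro k
    induction k using Int.induction_on with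
    | zero =>
      have H0 := hrec 0
      norm_num at H0 ⊢
      rw [← h1, ← h2, ← h3]
      linear_combination x 1 * H0
    | succ k ih =>
      have S := step (2*(k:ℤ))
      rw [show 2*((k:ℤ)+1)+2 = 2*(k:ℤ)+4 from by ring, show 2*((k:ℤ)+1)+1 = 2*(k:ℤ)+3 from by ring,
          show 2*((k:ℤ)+1) = 2*(k:ℤ)+2 from by ring]
      apply mul_left_cancel₀ (hne (2*(k:ℤ)+1))
      linear_combination x (2*(k:ℤ)+3) * ih - (X1*X3) * S
    | pred k ih =>
      have S := step (-2*(k:ℤ) - 2)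
      rw [show -2*(k:ℤ)-2+3 = -2*(k:ℤ)+1 from by ring, show -2*(k:ℤ)-2+2 = -2*(k:ℤ) from by ring,
          show -2*(k:ℤ)-2+1 = -2*(k:ℤ)-1 from by ring, show -2*(k:ℤ)-2+4 = -2*(k:ℤ)+2 from by ring] at S
      rw [show 2*(-(k:ℤ)-1)+2 = -2*(k:ℤ) from by ring, show 2*(-(k:ℤ)-1)+1 = -2*(k:ℤ)-1 from by ring,
          show 2*(-(k:ℤ)-1) = -2*(k:ℤ)-2 from by ring]
      rw [show 2*(-(k:ℤ))+2 = -2*(k:ℤ)+2 from by ring, show 2*(-(k:ℤ))+1 = -2*(k:ℤ)+1 from by ring,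
          show 2*(-(k:ℤ)) = -2*(k:ℤ) from by ring] at ih
      apply mul_left_cancel₀ (hne (-2*(k:ℤ)+1))
      linear_combination (X1*X3) * S + x (-2*(k:ℤ)-1) * ih
  have C1g : ∀ k : ℤ, w * x (2*k) = x (2*k-1) + x (2*k+1) := by
    intro k
    rw [hw, div_mul_eq_mul_div, div_eq_iff hX2]
    linear_combination - W k
  have C2g : ∀ k : ℤ, z * x (2*k+1) = x (2*k) + x (2*k+2) := by
    intro k
    rw [hz, div_mul_eq_mul_div, div_eq_iff (mul_ne_zero hX1 hX3)]
    linear_combination - Z k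
  intro m
  refine ⟨C1g m, C2g m, ?_, ?_⟩
  · have A := hrec (2*m-2)
    have B := hrec (2*m-1)
    rw [show 2*m-2+3 = 2*m+1 from by ring, show 2*m-2+1 = 2*m-1 from by ring,
        show 2*m-2+2 = 2*m from by ring] at A
    rw [show 2*m-1+3 = 2*m+2 from by ring, show 2*m-1+1 = 2*m from by ring,
        show 2*m-1+2 = 2*m+1 from by ring] at B
    have C2' := C2g (m-1)
    rw [show 2*(m-1)+1 = 2*m-1 from by ring, show 2*(m-1)+2 = 2*m from by ring,
        show 2*(m-1) = 2*m-2 from by ring] at C2'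
    apply mul_left_cancel₀ (mul_ne_zero (hne (2*m-1)) (hne (2*m+1)))
    linear_combination (x (2*m) * x (2*m+1)) * A + (x (2*m-2) * x (2*m+1)) * B
      - x (2*m+1) * C2'
  · have B := hrec (2*m-1)
    have C := hrec (2*m)
    rw [show 2*m-1+3 = 2*m+2 from by ring, show 2*m-1+1 = 2*m from by ring,
        show 2*m-1+2 = 2*m+1 from by ring] at B
    have C1' := C1g (m+1)
    rw [show 2*(m+1)-1 = 2*m+1 from by ring, show 2*(m+1)+1 = 2*m+3 from by ring,
        show 2*(m+1) = 2*m+2 from by ring] at C1'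
    apply mul_left_cancel₀ (mul_ne_zero (hne (2*m)) (hne (2*m+2)))
    linear_combination (x (2*m) * x (2*m+1)) * C + (x (2*m) * x (2*m+3)) * B
      - x (2*m) * C1'

end
end

section
/- For every integer m ≥ 1 the following identity holds in K: x(2m+1) · x₁^{m−1} x₂^{m−1} x₃^{m−2} = Σ_{e=(e₁,e₂,e₃)∈ℕ³} C(e₁−e₃, e₂−e₃) · C(m−1−e₃, m−1−e₁) · C(e₁−1, e₃) · x₁^{e₂+e₃} x₂^{(m−1)−e₁+e₃} x₃^{2(m−1)−e₁−e₂} + x₂^{m−1} x₃^{2m−2}, where the sum has finitely many nonzero terms (the binomial constraints force e₃ ≤ e₂ ≤ e₁ ≤ m−1). -/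
noncomputable section

/-- Binomial coefficient of integers, with the convention that it vanishes
unless `0 ≤ b ≤ a`. -/
def ichoose (a b : ℤ) : ℕ := if 0 ≤ b ∧ b ≤ a then a.toNat.choose b.toNat else 0

lemma ichoose_of {a b : ℤ} (h0 : 0 ≤ b) (h : b ≤ a) : ichoose a b = a.toNat.choose b.toNat :=
  if_pos ⟨h0, h⟩

lemma ichoose_zero {a b : ℤ} (h : ¬(0 ≤ b ∧ b ≤ a)) : ichoose a b = 0 := if_neg h

lemma ichoose_pascal (a b : ℤ) (h : ¬(a = 0 ∧ b = 0)) :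
    ichoose a b = ichoose (a-1) b + ichoose (a-1) (b-1) := by
  by_cases hb : 0 ≤ b
  · by_cases hba : b ≤ a
    · rcases eq_or_lt_of_le hb with hb0 | hb1
      · -- b = 0, a ≠ 0 so a ≥ 1
        have ha1 : 1 ≤ a := by rcases lt_or_eq_of_le hba with h'|h' <;> omega
        rw [ichoose_of hb hba, ichoose_of (by omega) (by omega),
          ichoose_zero (by omega)]
        have : b.toNat = 0 := by omega
        simp [this]
      · -- 1 ≤ b
        rcases eq_or_lt_of_le hba with hba0 | hba1
        · -- b = a
          rw [ichoose_of hb hba, ichoose_zero (by omega), ichoose_of (by omega) (by omega)]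
          have h1 : a.toNat = b.toNat := by omega
          have h2 : (a-1).toNat = (b-1).toNat := by omega
          simp [h1, h2, Nat.choose_self]
        · -- b < a
          rw [ichoose_of hb hba, ichoose_of (by omega) (by omega),
            ichoose_of (by omega) (by omega)]
          have h1 : a.toNat = (a-1).toNat + 1 := by omega
          have h2 : b.toNat = (b-1).toNat + 1 := by omega
          rw [h1, h2, Nat.choose_succ_succ']
          exact Nat.add_comm _ _
    · rw [ichoose_zero (by omega), ichoose_zero (by omega), ichoose_zero (by omega)]
  · rw [ichoose_zero (by omega), ichoose_zero (by omega), ichoose_zero (by omega)]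

def icoef (m : ℤ) (a b d : ℤ) : ℕ :=
  ichoose (a-d) (b-d) * ichoose (m-1-d) (m-1-a) * ichoose (a-1) d

lemma icoef_eq_zero {m a b d : ℤ} (h : d < 0 ∨ a < 0 ∨ b < 0) : icoef m a b d = 0 := by
  unfold icoef
  rcases lt_or_ge d 0 with hd | hd
  · rw [ichoose_zero (show ¬(0 ≤ d ∧ d ≤ a - 1) by omega)]; ring
  rcases h with h | h | h
  · omega
  · rw [ichoose_zero (show ¬(0 ≤ d ∧ d ≤ a - 1) by omega)]; ring
  · rw [ichoose_zero (show ¬(0 ≤ b - d ∧ b - d ≤ a - d) by omega)]; ring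

lemma ichoose_succ (n : ℤ) (hn : 0 ≤ n) : ichoose (n+1) n = n.toNat + 1 := by
  rw [ichoose_of hn (by omega), show (n+1).toNat = n.toNat + 1 by omega,
    Nat.choose_succ_self_right]

lemma ichoose_id (n : ℤ) (hn : 1 ≤ n) : ichoose n (n-1) = n.toNat := by
  rw [ichoose_of (by omega) (by omega), show n.toNat = (n-1).toNat + 1 by omega,
    Nat.choose_succ_self_right]

lemma key (n a b d : ℤ) (hn : 1 ≤ n) (hd : 0 ≤ d) (hb : 0 ≤ b) :
    icoef (n+2) a b d + icoef n (a-1) (b-1) (d-1)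
    = icoef (n+1) a b d + icoef (n+1) (a-1) b d + icoef (n+1) (a-1) (b-1) d
      + icoef (n+1) (a-1) (b-1) (d-1)
      + (if a = 1 ∧ d = 0 ∧ (b = 0 ∨ b = 1) then 1 else 0) := by
  have E1 : icoef (n+2) a b d
      = ichoose (a-d) (b-d) * ichoose (n+1-d) (n+1-a) * ichoose (a-1) d := by
    unfold icoef
    rw [show n+2-1-d = n+1-d by ring, show n+2-1-a = n+1-a by ring]
  have E2 : icoef n (a-1) (b-1) (d-1)
      = ichoose (a-d) (b-d) * ichoose (n-d) (n-a) * ichoose (a-2) (d-1) := by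
    unfold icoef
    rw [show a-1-(d-1) = a-d by ring, show b-1-(d-1) = b-d by ring,
      show n-1-(d-1) = n-d by ring, show n-1-(a-1) = n-a by ring,
      show a-1-1 = a-2 by ring]
  have E3 : icoef (n+1) a b d
      = ichoose (a-d) (b-d) * ichoose (n-d) (n-a) * ichoose (a-1) d := by
    unfold icoef
    rw [show n+1-1-d = n-d by ring, show n+1-1-a = n-a by ring]
  have E4 : icoef (n+1) (a-1) b d
      = ichoose (a-1-d) (b-d) * ichoose (n-d) (n+1-a) * ichoose (a-2) d := by
    unfold icoef
    rw [show n+1-1-d = n-d by ring, show n+1-1-(a-1) = n+1-a by ring,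
      show a-1-1 = a-2 by ring]
  have E5 : icoef (n+1) (a-1) (b-1) d
      = ichoose (a-1-d) (b-1-d) * ichoose (n-d) (n+1-a) * ichoose (a-2) d := by
    unfold icoef
    rw [show n+1-1-d = n-d by ring, show n+1-1-(a-1) = n+1-a by ring,
      show a-1-1 = a-2 by ring]
  have E6 : icoef (n+1) (a-1) (b-1) (d-1)
      = ichoose (a-d) (b-d) * ichoose (n+1-d) (n+1-a) * ichoose (a-2) (d-1) := by
    unfold icoef
    rw [show a-1-(d-1) = a-d by ring, show b-1-(d-1) = b-d by ring,
      show n+1-1-(d-1) = n+1-d by ring, show n+1-1-(a-1) = n+1-a by ring,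
      show a-1-1 = a-2 by ring]
  rw [E1, E2, E3, E4, E5, E6]
  by_cases hA : a = 1 ∧ d = 0
  · obtain ⟨rfl, rfl⟩ := hA
    simp only [sub_zero, show (1:ℤ)-1 = 0 by norm_num, show (1:ℤ)-2 = -1 by norm_num,
      show (0:ℤ)-1 = -1 by norm_num, show (n:ℤ)+1-1 = n by ring]
    rw [ichoose_succ n (by omega), ichoose_id n hn,
      show ichoose (0:ℤ) 0 = 1 by rw [ichoose_of] <;> norm_num,
      show ichoose (-1:ℤ) 0 = 0 from ichoose_zero (by omega),
      show ichoose (-1:ℤ) (-1) = 0 from ichoose_zero (by omega)]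
    by_cases hb1 : b = 0 ∨ b = 1
    · have hP : ichoose 1 b = 1 := by
        rcases hb1 with rfl | rfl
        · rw [ichoose_of] <;> norm_num
        · rw [ichoose_of] <;> norm_num
      rw [hP, if_pos (show _ by tauto)]
      ring
    · have hP : ichoose 1 b = 0 := ichoose_zero (by omega)
      rw [hP, if_neg (show _ by tauto)]
      ring
  · by_cases hAD : a = d
    · rw [show ichoose (a-1) d = 0 from ichoose_zero (by omega),
        show ichoose (a-2) d = 0 from ichoose_zero (by omega),
        show ichoose (a-2) (d-1) = 0 from ichoose_zero (by omega),
        if_neg (show ¬(a = 1 ∧ d = 0 ∧ (b = 0 ∨ b = 1)) by omega)]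
      ring
    · have hU : ichoose (a-1) d = ichoose (a-2) d + ichoose (a-2) (d-1) := by
        rw [ichoose_pascal (a-1) d (by omega), show a-1-1 = a-2 by ring]
      have hP : ichoose (a-d) (b-d)
          = ichoose (a-1-d) (b-d) + ichoose (a-1-d) (b-1-d) := by
        rw [ichoose_pascal (a-d) (b-d) (by omega), show a-d-1 = a-1-d by ring,
          show b-d-1 = b-1-d by ring]
      have hα : ichoose (n+1-d) (n+1-a)
          = ichoose (n-d) (n+1-a) + ichoose (n-d) (n-a) := by
        rw [ichoose_pascal (n+1-d) (n+1-a) (by omega), show n+1-d-1 = n-d by ring,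
          show n+1-a-1 = n-a by ring]
      have hIf : ¬(a = 1 ∧ d = 0 ∧ (b = 0 ∨ b = 1)) := by
        rintro ⟨rfl, rfl, -⟩; exact hA ⟨rfl, rfl⟩
      rw [if_neg hIf, hU, hP, hα]
      ring

lemma X_ne (i : Fin 3) : algebraMap (MvPolynomial (Fin 3) ℚ) Kf (MvPolynomial.X i) ≠ 0 := by
  rw [map_ne_zero_iff _ (IsFractionRing.injective (MvPolynomial (Fin 3) ℚ) Kf)]
  exact MvPolynomial.X_ne_zero i

lemma hX1 : X1 ≠ 0 := X_ne 0
lemma hX2 : X2 ≠ 0 := X_ne 1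
lemma hX3 : X3 ≠ 0 := X_ne 2

def NKf : Kf := X2*X3^2 + X3 + X1 + X1^2*X2

lemma seqrec (x : ℤ → Kf)
    (h1 : x 1 = X1) (h2 : x 2 = X2) (h3 : x 3 = X3)
    (hne : ∀ m : ℤ, x m ≠ 0)
    (hrec : ∀ m : ℤ, x m * x (m + 3) = x (m + 1) * x (m + 2) + 1) :
    ∀ m : ℤ, X1*X2*X3 * x (m+4) + X1*X2*X3 * x m = NKf * x (m+2) := by
  have hA : ∀ m : ℤ, x (m+1) * (x (m+4) + x (m+2)) = x (m+3) * (x (m+2) + x m) := by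
    intro m
    have r1 := hrec m
    have r2 := hrec (m+1)
    rw [show m+1+3 = m+4 by ring, show m+1+1 = m+2 by ring, show m+1+2 = m+3 by ring] at r2
    linear_combination r2 - r1
  set u : ℤ → Kf := fun m => (x (m+2) + x m) / x (m+1) with hu
  have hu_mul : ∀ m : ℤ, u m * x (m+1) = x (m+2) + x m := fun m =>
    div_mul_cancel₀ _ (hne (m+1))
  have hustep : ∀ m : ℤ, u (m+2) = u m := by
    intro m
    rw [hu]
    simp only
    rw [show m+2+2 = m+4 by ring, show m+2+1 = m+3 by ring,
      div_eq_div_iff (hne (m+3)) (hne (m+1))]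
    linear_combination hA m
  have hv : ∀ m : ℤ, u m * u (m+1) = u 1 * u 2 := by
    intro m
    induction m using Int.induction_on with
    | zero =>
      rw [show (0:ℤ)+1 = 1 by ring, show (2:ℤ) = 0+2 by ring, hustep 0]; ring
    | succ k ih =>
      rw [show (k:ℤ)+1+1 = k+2 by ring, hustep k, mul_comm]; exact ih
    | pred k ih =>
      have h' : u (-(k:ℤ)+1) = u (-(k:ℤ)-1) := by
        rw [show (-(k:ℤ)+1) = (-(k:ℤ)-1)+2 by ring, hustep]
      rw [show (-(k:ℤ)-1+1) = -(k:ℤ) by ring, ← h', mul_comm]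
      exact ih
  have hrec4 : ∀ m : ℤ, x (m+4) + x m = (u 1 * u 2 - 2) * x (m+2) := by
    intro m
    have hm1 := hu_mul m
    have hm2 := hu_mul (m+1)
    have hm3 := hu_mul (m+2)
    rw [show m+1+2 = m+3 by ring, show m+1+1 = m+2 by ring] at hm2
    rw [show m+2+2 = m+4 by ring, show m+2+1 = m+3 by ring, hustep m] at hm3
    have h5 := hv m
    linear_combination -hm3 - hm1 - (u m) * hm2 + x (m+2) * h5
  have e14 : x 1 * x 4 = x 2 * x 3 + 1 := by
    have := hrec 1; norm_num at this; exact this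
  have hu1 : u 1 * x 2 = x 3 + x 1 := by have := hu_mul 1; norm_num at this; exact this
  have hu2 : u 2 * x 3 = x 4 + x 2 := by have := hu_mul 2; norm_num at this; exact this
  have hC : (u 1 * u 2 - 2) * (x 1 * x 2 * x 3)
      = x 2*(x 3)^2 + x 3 + x 1 + (x 1)^2* x 2 := by
    linear_combination (x 1 * u 2 * x 3) * hu1 + (x 1 * (x 3 + x 1)) * hu2
      + (x 3 + x 1) * e14
  intro m
  rw [← h1, ← h2, ← h3]
  unfold NKf
  rw [← h1, ← h2, ← h3]
  linear_combination (x 1 * x 2 * x 3) * hrec4 m + (x (m+2)) * hC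

lemma icoef_bounds {m a b d : ℤ} (h : icoef m a b d ≠ 0) :
    0 ≤ d ∧ d ≤ b ∧ b ≤ a ∧ d ≤ a - 1 ∧ a ≤ m - 1 := by
  unfold icoef at h
  rcases Nat.mul_ne_zero_iff.1 h with ⟨h12, h3⟩
  rcases Nat.mul_ne_zero_iff.1 h12 with ⟨hf, hmid⟩
  have c1 : 0 ≤ b - d ∧ b - d ≤ a - d := by
    by_contra hc; exact hf (ichoose_zero hc)
  have c2 : 0 ≤ m-1-a ∧ m-1-a ≤ m-1-d := by
    by_contra hc; exact hmid (ichoose_zero hc)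
  have c3 : 0 ≤ d ∧ d ≤ a - 1 := by
    by_contra hc; exact h3 (ichoose_zero hc)
  omega

def mono (m : ℤ) (e : ℕ × ℕ × ℕ) : Kf :=
  X1 ^ ((e.2.1 : ℤ) + (e.2.2 : ℤ)) * X2 ^ ((m - 1) - (e.1 : ℤ) + (e.2.2 : ℤ)) *
    X3 ^ (2 * (m - 1) - (e.1 : ℤ) - (e.2.1 : ℤ))

def term (m : ℤ) (e : ℕ × ℕ × ℕ) : Kf :=
  (icoef m e.1 e.2.1 e.2.2 : Kf) * mono m e

def stm (m : ℤ) : Kf := X2 ^ (m - 1) * X3 ^ (2 * m - 2)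

def Tsum (m : ℤ) : Kf := ∑ᶠ e : ℕ × ℕ × ℕ, term m e

def Box (k : ℕ) : Finset (ℕ × ℕ × ℕ) :=
  Finset.range k ×ˢ Finset.range k ×ˢ Finset.range k

lemma mem_Box {k : ℕ} {e : ℕ × ℕ × ℕ} : e ∈ Box k ↔ e.1 < k ∧ e.2.1 < k ∧ e.2.2 < k := by
  simp [Box, Finset.mem_product]

lemma mono_mul {m m' : ℤ} {e e' : ℕ × ℕ × ℕ} (c1 c2 c3 : ℤ)
    (h1 : (e.2.1 : ℤ) + (e.2.2 : ℤ) = c1 + ((e'.2.1 : ℤ) + (e'.2.2 : ℤ)))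
    (h2 : (m - 1) - (e.1 : ℤ) + (e.2.2 : ℤ) = c2 + ((m' - 1) - (e'.1 : ℤ) + (e'.2.2 : ℤ)))
    (h3 : 2 * (m - 1) - (e.1 : ℤ) - (e.2.1 : ℤ) = c3 + (2 * (m' - 1) - (e'.1 : ℤ) - (e'.2.1 : ℤ))) :
    mono m e = (X1 ^ c1 * X2 ^ c2 * X3 ^ c3) * mono m' e' := by
  unfold mono
  rw [h1, h2, h3, zpow_add₀ hX1, zpow_add₀ hX2, zpow_add₀ hX3]
  ring

lemma term_bounds {m : ℤ} {e : ℕ × ℕ × ℕ} (h : term m e ≠ 0) :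
    (e.2.2 : ℤ) ≤ e.2.1 ∧ (e.2.1 : ℤ) ≤ e.1 ∧ (e.1 : ℤ) ≤ m - 1 := by
  have hc : icoef m e.1 e.2.1 e.2.2 ≠ 0 := by
    intro h0
    apply h
    unfold term
    rw [h0]
    simp
  have := icoef_bounds hc
  omega

lemma Tsum_eq_sum {m : ℤ} {k : ℕ} (hk : m ≤ k) :
    Tsum m = ∑ E ∈ Box k, term m E := by
  apply finsum_eq_sum_of_support_subset
  intro e he
  have hb := term_bounds he
  simp only [Finset.coe_sort_coe, Finset.mem_coe, mem_Box]
  omega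

lemma sum_shift {k : ℕ} (hk : 1 ≤ k) (σ : ℕ × ℕ × ℕ)
    (hσ : σ.1 ≤ 1 ∧ σ.2.1 ≤ 1 ∧ σ.2.2 ≤ 1) (g t : ℕ × ℕ × ℕ → Kf)
    (hpt : ∀ e : ℕ × ℕ × ℕ, g (e.1 + σ.1, e.2.1 + σ.2.1, e.2.2 + σ.2.2) = t e)
    (hg : ∀ E : ℕ × ℕ × ℕ, g E ≠ 0 →
      σ.1 ≤ E.1 ∧ σ.2.1 ≤ E.2.1 ∧ σ.2.2 ≤ E.2.2 ∧
      E.1 - σ.1 < k - 1 ∧ E.2.1 - σ.2.1 < k - 1 ∧ E.2.2 - σ.2.2 < k - 1)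
    (ht : ∀ e : ℕ × ℕ × ℕ, t e ≠ 0 → e.1 < k - 1 ∧ e.2.1 < k - 1 ∧ e.2.2 < k - 1) :
    ∑ E ∈ Box k, g E = ∑ e ∈ Box k, t e := by
  set ι : ℕ × ℕ × ℕ → ℕ × ℕ × ℕ := fun e => (e.1 + σ.1, e.2.1 + σ.2.1, e.2.2 + σ.2.2) with hι
  have hinj : ∀ a ∈ Box (k-1), ∀ b ∈ Box (k-1), ι a = ι b → a = b := by
    intro a _ b _ hab
    simp only [hι, Prod.ext_iff] at hab ⊢
    omega
  have himg : Finset.image ι (Box (k-1)) ⊆ Box k := by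
    intro E hE
    rw [Finset.mem_image] at hE
    obtain ⟨e, he, rfl⟩ := hE
    rw [mem_Box] at he ⊢
    simp only [hι]
    omega
  rw [← Finset.sum_subset himg (by
    rintro ⟨E1, E2, E3⟩ _ hE
    by_contra hne
    apply hE
    obtain ⟨c1, c2, c3, c4, c5, c6⟩ := hg (E1, E2, E3) hne
    simp only at c1 c2 c3 c4 c5 c6
    rw [Finset.mem_image]
    refine ⟨(E1 - σ.1, E2 - σ.2.1, E3 - σ.2.2), ?_, ?_⟩
    · rw [mem_Box]
      exact ⟨by omega, show E2 - σ.2.1 < k - 1 by omega, show E3 - σ.2.2 < k - 1 by omega⟩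
    · simp only [hι, Prod.mk.injEq]
      exact ⟨by omega, by omega, by omega⟩)]
  rw [Finset.sum_image hinj]
  have : ∀ e ∈ Box (k-1), g (ι e) = t e := fun e _ => hpt e
  rw [Finset.sum_congr rfl this]
  apply Finset.sum_subset
  · intro e he; rw [mem_Box] at he ⊢; omega
  · intro e _ he
    by_contra hne
    exact he (mem_Box.2 (by have := ht e hne; omega))

def Gf (ν : ℤ) (σ : ℕ × ℕ × ℕ) (μ : ℤ) (E : ℕ × ℕ × ℕ) : Kf :=
  (icoef ν ((E.1:ℤ) - σ.1) ((E.2.1:ℤ) - σ.2.1) ((E.2.2:ℤ) - σ.2.2) : Kf) * mono μ E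

lemma Gsum (ν : ℤ) (σ : ℕ × ℕ × ℕ) (hσ : σ.1 ≤ 1 ∧ σ.2.1 ≤ 1 ∧ σ.2.2 ≤ 1)
    (μ : ℤ) (w : Kf) (k : ℕ) (hν : (ν:ℤ) + 1 ≤ (k:ℤ)) (hk : 1 ≤ k)
    (hw : ∀ e : ℕ × ℕ × ℕ, mono μ (e.1 + σ.1, e.2.1 + σ.2.1, e.2.2 + σ.2.2) = w * mono ν e) :
    ∑ E ∈ Box k, Gf ν σ μ E = w * Tsum ν := by
  rw [Tsum_eq_sum (show ν ≤ (k:ℤ) by omega), Finset.mul_sum]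
  apply sum_shift hk σ hσ _ (fun e => w * term ν e)
  · intro e
    unfold Gf
    rw [show ((e.1 + σ.1 : ℕ) : ℤ) - (σ.1:ℤ) = (e.1:ℤ) by push_cast; ring,
      show ((e.2.1 + σ.2.1 : ℕ) : ℤ) - (σ.2.1:ℤ) = (e.2.1:ℤ) by push_cast; ring,
      show ((e.2.2 + σ.2.2 : ℕ) : ℤ) - (σ.2.2:ℤ) = (e.2.2:ℤ) by push_cast; ring,
      hw e]
    unfold term
    ring
  · intro E hE
    have hco : icoef ν ((E.1:ℤ) - σ.1) ((E.2.1:ℤ) - σ.2.1) ((E.2.2:ℤ) - σ.2.2) ≠ 0 := by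
      intro h0
      apply hE
      unfold Gf
      rw [h0]
      simp
    have hB := icoef_bounds hco
    refine ⟨by omega, by omega, by omega, by omega, by omega, by omega⟩
  · intro e he
    have hterm : term ν e ≠ 0 := by
      intro h0; apply he; rw [h0, mul_zero]
    have hB := term_bounds hterm
    refine ⟨by omega, by omega, by omega⟩

lemma stm_mono (μ : ℤ) : mono μ (0, 0, 0) = stm μ := by
  unfold mono stm
  norm_num
  rw [show 2 * (μ - 1) = 2 * μ - 2 by ring]
  exact Or.inl rfl

lemma Scomb (m : ℤ) (hm : 1 ≤ m) :
    Tsum (m+2) + stm (m+2) + (X1*X2*X3)^2 * (Tsum m + stm m)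
      = NKf * (Tsum (m+1) + stm (m+1)) := by
  set k : ℕ := (m+1).toNat + 2 with hkdef
  have hk1 : 1 ≤ k := by omega
  have hkm : (m:ℤ) + 2 ≤ (k:ℤ) := by omega
  -- pointwise key identity
  have hkeyE : ∀ E : ℕ × ℕ × ℕ,
      term (m+2) E + Gf m (1,1,1) (m+2) E
      = Gf (m+1) (0,0,0) (m+2) E + Gf (m+1) (1,0,0) (m+2) E + Gf (m+1) (1,1,0) (m+2) E
        + Gf (m+1) (1,1,1) (m+2) E
        + (if E = (1,0,0) then mono (m+2) E else 0)
        + (if E = (1,1,0) then mono (m+2) E else 0) := by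
    intro E
    have h := key m E.1 E.2.1 E.2.2 hm (Int.natCast_nonneg _) (Int.natCast_nonneg _)
    have hcast : ((icoef (m+2) (E.1:ℤ) E.2.1 E.2.2 : ℕ) : Kf)
        + ((icoef m ((E.1:ℤ)-1) ((E.2.1:ℤ)-1) ((E.2.2:ℤ)-1) : ℕ) : Kf)
        = ((icoef (m+1) (E.1:ℤ) E.2.1 E.2.2 : ℕ) : Kf)
          + ((icoef (m+1) ((E.1:ℤ)-1) (E.2.1:ℤ) E.2.2 : ℕ) : Kf)
          + ((icoef (m+1) ((E.1:ℤ)-1) ((E.2.1:ℤ)-1) E.2.2 : ℕ) : Kf)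
          + ((icoef (m+1) ((E.1:ℤ)-1) ((E.2.1:ℤ)-1) ((E.2.2:ℤ)-1) : ℕ) : Kf)
          + (if (E.1:ℤ) = 1 ∧ (E.2.2:ℤ) = 0 ∧ ((E.2.1:ℤ) = 0 ∨ (E.2.1:ℤ) = 1)
              then 1 else 0) := by
      rw [← Nat.cast_add, ← Nat.cast_add, ← Nat.cast_add, ← Nat.cast_add, h]
      push_cast
      ring
    have hiff : ((E.1:ℤ) = 1 ∧ (E.2.2:ℤ) = 0 ∧ ((E.2.1:ℤ) = 0 ∨ (E.2.1:ℤ) = 1))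
        ↔ (E = (1,0,0) ∨ E = (1,1,0)) := by
      obtain ⟨a, b, d⟩ := E
      simp only [Prod.mk.injEq]
      constructor
      · rintro ⟨ha, hd, hb | hb⟩
        · left; refine ⟨by omega, by omega, by omega⟩
        · right; refine ⟨by omega, by omega, by omega⟩
      · rintro (⟨rfl, rfl, rfl⟩ | ⟨rfl, rfl, rfl⟩) <;> norm_num
    unfold term Gf
    simp only [Nat.cast_zero, Nat.cast_one, sub_zero]
    by_cases h1 : E = (1,0,0)
    · have h2 : E ≠ (1,1,0) := by subst h1; decide
      rw [if_pos h1, if_neg h2]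
      rw [if_pos (hiff.2 (Or.inl h1))] at hcast
      linear_combination (mono (m+2) E) * hcast
    · by_cases h2 : E = (1,1,0)
      · rw [if_neg h1, if_pos h2]
        rw [if_pos (hiff.2 (Or.inr h2))] at hcast
        linear_combination (mono (m+2) E) * hcast
      · rw [if_neg h1, if_neg h2]
        rw [if_neg (fun hc => by rcases hiff.1 hc with h | h; exacts [h1 h, h2 h])] at hcast
        linear_combination (mono (m+2) E) * hcast
  have hsum := Finset.sum_congr rfl (fun E (_ : E ∈ Box k) => hkeyE E)
  rw [Finset.sum_add_distrib] at hsum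
  rw [Finset.sum_add_distrib, Finset.sum_add_distrib, Finset.sum_add_distrib,
    Finset.sum_add_distrib, Finset.sum_add_distrib] at hsum
  -- evaluate each piece
  have hG0 : ∑ E ∈ Box k, Gf (m+1) (0,0,0) (m+2) E = (X2*X3^2) * Tsum (m+1) := by
    exact Gsum (m+1) (0,0,0) (by norm_num) (m+2) (X2*X3^2) k (by omega) hk1 (fun e => by
      rw [mono_mul (m' := m+1) (e' := e) (0:ℤ) 1 2 (by push_cast; ring) (by push_cast; ring)
        (by push_cast; ring)]
      norm_num)
  have hG1 : ∑ E ∈ Box k, Gf (m+1) (1,0,0) (m+2) E = X3 * Tsum (m+1) := by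
    exact Gsum (m+1) (1,0,0) (by norm_num) (m+2) X3 k (by omega) hk1 (fun e => by
      rw [mono_mul (m' := m+1) (e' := e) (0:ℤ) 0 1 (by push_cast; ring) (by push_cast; ring)
        (by push_cast; ring)]
      norm_num)
  have hG2 : ∑ E ∈ Box k, Gf (m+1) (1,1,0) (m+2) E = X1 * Tsum (m+1) := by
    exact Gsum (m+1) (1,1,0) (by norm_num) (m+2) X1 k (by omega) hk1 (fun e => by
      rw [mono_mul (m' := m+1) (e' := e) (1:ℤ) 0 0 (by push_cast; ring) (by push_cast; ring)
        (by push_cast; ring)]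
      norm_num)
  have hG3 : ∑ E ∈ Box k, Gf (m+1) (1,1,1) (m+2) E = (X1^2*X2) * Tsum (m+1) := by
    exact Gsum (m+1) (1,1,1) (by norm_num) (m+2) (X1^2*X2) k (by omega) hk1 (fun e => by
      rw [mono_mul (m' := m+1) (e' := e) (2:ℤ) 1 0 (by push_cast; ring) (by push_cast; ring)
        (by push_cast; ring)]
      norm_num)
  have hG4 : ∑ E ∈ Box k, Gf m (1,1,1) (m+2) E = (X1*X2*X3)^2 * Tsum m := by
    exact Gsum m (1,1,1) (by norm_num) (m+2) ((X1*X2*X3)^2) k (by omega) hk1 (fun e => by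
      rw [mono_mul (m' := m) (e' := e) (2:ℤ) 2 2 (by push_cast; ring) (by push_cast; ring)
        (by push_cast; ring)]
      rw [show ((2:ℤ)) = ((2:ℕ):ℤ) by norm_num, zpow_natCast, zpow_natCast, zpow_natCast]
      ring)
  have hD1 : ∑ E ∈ Box k, (if E = ((1:ℕ),(0:ℕ),(0:ℕ)) then mono (m+2) E else 0)
      = X3 * stm (m+1) := by
    rw [Finset.sum_ite_eq' (Box k) ((1:ℕ),(0:ℕ),(0:ℕ)) (mono (m+2)),
      if_pos (mem_Box.2 ⟨by omega, show (0:ℕ) < k by omega, show (0:ℕ) < k by omega⟩)]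
    rw [mono_mul (m' := m+1) (e' := ((0:ℕ),(0:ℕ),(0:ℕ))) (0:ℤ) 0 1 (by push_cast; try ring)
      (by push_cast; try ring) (by push_cast; try ring), stm_mono]
    norm_num
  have hD2 : ∑ E ∈ Box k, (if E = ((1:ℕ),(1:ℕ),(0:ℕ)) then mono (m+2) E else 0)
      = X1 * stm (m+1) := by
    rw [Finset.sum_ite_eq' (Box k) ((1:ℕ),(1:ℕ),(0:ℕ)) (mono (m+2)),
      if_pos (mem_Box.2 ⟨by omega, show (1:ℕ) < k by omega, show (0:ℕ) < k by omega⟩)]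
    rw [mono_mul (m' := m+1) (e' := ((0:ℕ),(0:ℕ),(0:ℕ))) (1:ℤ) 0 0 (by push_cast; try ring)
      (by push_cast; try ring) (by push_cast; try ring), stm_mono]
    norm_num
  have hstA : stm (m+2) = (X2*X3^2) * stm (m+1) := by
    rw [← stm_mono (m+2), ← stm_mono (m+1),
      mono_mul (m' := m+1) (e' := ((0:ℕ),(0:ℕ),(0:ℕ))) (0:ℤ) 1 2 (by push_cast; try ring)
      (by push_cast; try ring) (by push_cast; try ring)]
    norm_num
  have hstB : (X1^2*X2) * stm (m+1) = (X1*X2*X3)^2 * stm m := by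
    rw [← stm_mono (m+1), ← stm_mono m,
      mono_mul (m' := m) (e' := ((0:ℕ),(0:ℕ),(0:ℕ))) (0:ℤ) 1 2 (by push_cast; try ring)
      (by push_cast; try ring) (by push_cast; try ring)]
    norm_num
    ring
  rw [hG0, hG1, hG2, hG3, hG4, hD1, hD2, ← Tsum_eq_sum hkm] at hsum
  unfold NKf
  linear_combination hsum + hstA - hstB

lemma zsplit {y : Kf} (hy : y ≠ 0) (p q : ℤ) (h : p = 1 + q) : y^p = y * y^q := by
  rw [h, zpow_add₀ hy, zpow_one]

lemma Tsum1 : Tsum 1 = 0 := by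
  rw [Tsum_eq_sum (show (1:ℤ) ≤ ((1:ℕ):ℤ) by norm_num)]
  rw [show Box 1 = {((0:ℕ),(0:ℕ),(0:ℕ))} from by decide]
  rw [Finset.sum_singleton]
  norm_num [term, icoef, ichoose]

lemma Tsum2 : Tsum 2 = X3 + X1 := by
  rw [Tsum_eq_sum (show (2:ℤ) ≤ ((2:ℕ):ℤ) by norm_num)]
  rw [show Box 2 = {((0:ℕ),(0:ℕ),(0:ℕ)), ((0:ℕ),(0:ℕ),(1:ℕ)), ((0:ℕ),(1:ℕ),(0:ℕ)),
    ((0:ℕ),(1:ℕ),(1:ℕ)), ((1:ℕ),(0:ℕ),(0:ℕ)), ((1:ℕ),(0:ℕ),(1:ℕ)), ((1:ℕ),(1:ℕ),(0:ℕ)),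
    ((1:ℕ),(1:ℕ),(1:ℕ))} from by decide]
  rw [Finset.sum_insert (by decide), Finset.sum_insert (by decide),
    Finset.sum_insert (by decide), Finset.sum_insert (by decide),
    Finset.sum_insert (by decide), Finset.sum_insert (by decide),
    Finset.sum_insert (by decide), Finset.sum_singleton]
  norm_num [term, mono]
  rw [show icoef 2 0 0 0 = 0 from by decide, show icoef 2 0 0 1 = 0 from by decide,
    show icoef 2 0 1 0 = 0 from by decide, show icoef 2 0 1 1 = 0 from by decide,
    show icoef 2 1 0 0 = 1 from by decide, show icoef 2 1 0 1 = 0 from by decide,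
    show icoef 2 1 1 0 = 1 from by decide, show icoef 2 1 1 1 = 0 from by decide]
  norm_num

theorem stmt1 (x : ℤ → Kf)
    (h1 : x 1 = X1) (h2 : x 2 = X2) (h3 : x 3 = X3)
    (hne : ∀ m : ℤ, x m ≠ 0)
    (hrec : ∀ m : ℤ, x m * x (m + 3) = x (m + 1) * x (m + 2) + 1) :
    ∀ m : ℤ, 1 ≤ m →
      ∀ f : ℕ × ℕ × ℕ → Kf,
        (f = fun e =>
          ((ichoose ((e.1 : ℤ) - e.2.2) ((e.2.1 : ℤ) - e.2.2) *
            ichoose (m - 1 - e.2.2) (m - 1 - e.1) *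
            ichoose ((e.1 : ℤ) - 1) (e.2.2 : ℤ) : ℕ) : Kf) *
            X1 ^ ((e.2.1 : ℤ) + (e.2.2 : ℤ)) *
            X2 ^ ((m - 1) - (e.1 : ℤ) + (e.2.2 : ℤ)) *
            X3 ^ (2 * (m - 1) - (e.1 : ℤ) - (e.2.1 : ℤ))) →
        (Function.support f).Finite ∧
        x (2 * m + 1) * X1 ^ (m - 1) * X2 ^ (m - 1) * X3 ^ (m - 2) =
          (∑ᶠ e : ℕ × ℕ × ℕ, f e) + X2 ^ (m - 1) * X3 ^ (2 * m - 2) := by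
  intro m hm f hf
  have hfterm : f = term m := by
    subst hf
    funext e
    simp only [term, mono, icoef]
    push_cast
    ring
  constructor
  · rw [hfterm]
    apply Set.Finite.subset (Finset.finite_toSet (Box (m.toNat + 1)))
    intro e he
    have hb := term_bounds he
    simp only [Finset.coe_sort_coe, Finset.mem_coe, mem_Box]
    omega
  · rw [hfterm]
    show x (2 * m + 1) * X1 ^ (m - 1) * X2 ^ (m - 1) * X3 ^ (m - 2) = Tsum m + stm m
    have P1 : x (2 * 1 + 1) * X1 ^ ((1:ℤ) - 1) * X2 ^ ((1:ℤ) - 1) * X3 ^ ((1:ℤ) - 2)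
        = Tsum 1 + stm 1 := by
      rw [Tsum1]
      norm_num [stm]
      rw [h3]
      exact mul_inv_cancel₀ hX3
    have P2 : x (2 * 2 + 1) * X1 ^ ((2:ℤ) - 1) * X2 ^ ((2:ℤ) - 1) * X3 ^ ((2:ℤ) - 2)
        = Tsum 2 + stm 2 := by
      have r1 := hrec 1
      have r2 := hrec 2
      rw [show (1:ℤ)+3 = 4 by norm_num, show (1:ℤ)+1 = 2 by norm_num,
        show (1:ℤ)+2 = 3 by norm_num, h1, h2, h3] at r1
      rw [show (2:ℤ)+3 = 5 by norm_num, show (2:ℤ)+1 = 3 by norm_num,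
        show (2:ℤ)+2 = 4 by norm_num, h2, h3] at r2
      rw [Tsum2]
      norm_num [stm]
      linear_combination X1 * r2 + X3 * r1
    have main : ∀ n : ℤ, 1 ≤ n →
        (x (2 * n + 1) * X1 ^ (n - 1) * X2 ^ (n - 1) * X3 ^ (n - 2) = Tsum n + stm n) ∧
        (x (2 * (n+1) + 1) * X1 ^ ((n+1) - 1) * X2 ^ ((n+1) - 1) * X3 ^ ((n+1) - 2)
          = Tsum (n+1) + stm (n+1)) := by
      refine fun n => Int.le_induction
        (motive := fun n _ => (x (2*n+1) * X1^(n-1) * X2^(n-1) * X3^(n-2) = Tsum n + stm n) ∧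
          (x (2*(n+1)+1) * X1^(n+1-1) * X2^(n+1-1) * X3^(n+1-2) = Tsum (n+1) + stm (n+1)))
        ?_ ?_ n
      · exact ⟨P1, P2⟩
      rintro n hn ⟨hP1, hP2⟩
      refine ⟨hP2, ?_⟩
      have hP2 := hP2
      have hrx := seqrec x h1 h2 h3 hne hrec (2*n+1)
      rw [show 2*n+1+4 = 2*(n+1+1)+1 by ring, show 2*n+1+2 = 2*(n+1)+1 by ring] at hrx
      have hS := Scomb n hn
      rw [show n+2 = n+1+1 by ring] at hS
      have s1 : X1 ^ (n+1+1-1 : ℤ) = X1 * X1 ^ (n+1-1 : ℤ) := zsplit hX1 _ _ (by ring)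
      have s2 : X2 ^ (n+1+1-1 : ℤ) = X2 * X2 ^ (n+1-1 : ℤ) := zsplit hX2 _ _ (by ring)
      have s3 : X3 ^ (n+1+1-2 : ℤ) = X3 * X3 ^ (n+1-2 : ℤ) := zsplit hX3 _ _ (by ring)
      have s1' : X1 ^ (n+1-1 : ℤ) = X1 * X1 ^ (n-1 : ℤ) := zsplit hX1 _ _ (by ring)
      have s2' : X2 ^ (n+1-1 : ℤ) = X2 * X2 ^ (n-1 : ℤ) := zsplit hX2 _ _ (by ring)
      have s3' : X3 ^ (n+1-2 : ℤ) = X3 * X3 ^ (n-2 : ℤ) := zsplit hX3 _ _ (by ring)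
      rw [s1, s2, s3, s1', s2', s3']
      rw [s1', s2', s3'] at hP2
      linear_combination (X1*X2*X3) * (X1^(n-1:ℤ)*X2^(n-1:ℤ)*X3^(n-2:ℤ)) * hrx
        + NKf * hP2 - (X1*X2*X3)^2 * hP1 - hS
    exact (main m hm).1
end
end

section
/- For every integer m and every integer n ≥ 1, each of the elements x m, u n, w and z of K is a Laurent polynomial in x₁, x₂, x₃ with nonnegative integer coefficients; that is, each lies in the additive submonoid of K generated by the Laurent monomials x₁^{a} x₂^{b} x₃^{c} with a, b, c ∈ ℤ. -/
noncomputable section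

/-- Row-vector iteration for the 2×2 matrix `[[α, 1], [γ, δ]]` acting on the right:
`rs α γ δ p n` is `p * Mⁿ` where `p` is a row vector. -/
noncomputable def rs (α γ δ : Kf) (p : Kf × Kf) : ℕ → Kf × Kf
  | 0 => p
  | n+1 => (α * (rs α γ δ p n).1 + γ * (rs α γ δ p n).2,
            (rs α γ δ p n).1 + δ * (rs α γ δ p n).2)

lemma rs_cheb (α γ δ v : Kf) (p : Kf × Kf) (htr : α + δ = v) (hdet : α * δ - γ = 1) (n : ℕ) :
    (rs α γ δ p (n+2)).1 = v * (rs α γ δ p (n+1)).1 - (rs α γ δ p n).1 ∧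
    (rs α γ δ p (n+2)).2 = v * (rs α γ δ p (n+1)).2 - (rs α γ δ p n).2 := by
  simp only [rs]
  constructor
  · linear_combination (α * (rs α γ δ p n).1 + γ * (rs α γ δ p n).2) * htr
      - (rs α γ δ p n).1 * hdet
  · linear_combination ((rs α γ δ p n).1 + δ * (rs α γ δ p n).2) * htr
      - (rs α γ δ p n).2 * hdet

set_option maxHeartbeats 2000000 in
theorem stmt7 (x : ℤ → Kf)
    (h1 : x 1 = X1) (h2 : x 2 = X2) (h3 : x 3 = X3)
    (hne : ∀ m : ℤ, x m ≠ 0)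
    (hrec : ∀ m : ℤ, x m * x (m + 3) = x (m + 1) * x (m + 2) + 1)
    (w z : Kf)
    (hw : w = (X1 + X3) / X2)
    (hz : z = (X1 * X2 + 1 + X2 * X3) / (X1 * X3))
    (u : ℕ → Kf)
    (hu0 : u 0 = 1) (hu1 : u 1 = z * w - 2) (hu2 : u 2 = (u 1) ^ 2 - 2)
    (hurec : ∀ n : ℕ, 2 ≤ n → u (n + 1) = u 1 * u n - u (n - 1))
    (S : AddSubmonoid Kf)
    (hS : S = AddSubmonoid.closure
      {t : Kf | ∃ a b c : ℤ, t = X1 ^ a * X2 ^ b * X3 ^ c}) :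
    (∀ m : ℤ, x m ∈ S) ∧ (∀ n : ℕ, 1 ≤ n → u n ∈ S) ∧ w ∈ S ∧ z ∈ S := by
  have inj := IsFractionRing.injective (MvPolynomial (Fin 3) ℚ) Kf
  have hX1 : X1 ≠ 0 := by
    rw [X1, Ne, map_eq_zero_iff _ inj]; exact MvPolynomial.X_ne_zero 0
  have hX2 : X2 ≠ 0 := by
    rw [X2, Ne, map_eq_zero_iff _ inj]; exact MvPolynomial.X_ne_zero 1
  have hX3 : X3 ≠ 0 := by
    rw [X3, Ne, map_eq_zero_iff _ inj]; exact MvPolynomial.X_ne_zero 2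
  -- membership basics
  have hmono : ∀ a b c : ℤ, X1 ^ a * X2 ^ b * X3 ^ c ∈ S := by
    intro a b c; rw [hS]; exact AddSubmonoid.subset_closure ⟨a, b, c, rfl⟩
  have hmul : ∀ p ∈ S, ∀ q ∈ S, p * q ∈ S := by
    rw [hS]
    intro p hp q hq
    induction hq using AddSubmonoid.closure_induction with
    | mem t ht =>
      induction hp using AddSubmonoid.closure_induction with
      | mem r hr =>
        obtain ⟨a, b, c, rfl⟩ := hr
        obtain ⟨a', b', c', rfl⟩ := ht
        exact AddSubmonoid.subset_closure ⟨a + a', b + b', c + c',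
          by rw [zpow_add₀ hX1, zpow_add₀ hX2, zpow_add₀ hX3]; ring⟩
      | zero => rw [zero_mul]; exact zero_mem _
      | add r r' _ _ hr hr' => rw [add_mul]; exact add_mem hr hr'
    | zero => rw [mul_zero]; exact zero_mem _
    | add t t' _ _ ht ht' => rw [mul_add]; exact add_mem ht ht'
  have hX1m : X1 ∈ S := by simpa using hmono 1 0 0
  have hX2m : X2 ∈ S := by simpa using hmono 0 1 0
  have hX3m : X3 ∈ S := by simpa using hmono 0 0 1
  have hX1i : X1⁻¹ ∈ S := by simpa using hmono (-1) 0 0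
  have hX2i : X2⁻¹ ∈ S := by simpa using hmono 0 (-1) 0
  have hX3i : X3⁻¹ ∈ S := by simpa using hmono 0 0 (-1)
  have hone : (1 : Kf) ∈ S := by simpa using hmono 0 0 0
  -- normalized exchange relation
  have hr : ∀ a b c d : ℤ, b = a + 3 → c = a + 1 → d = a + 2 →
      x a * x b = x c * x d + 1 := by
    intro a b c d hb hc hd; subst hb; subst hc; subst hd; exact hrec a
  have hx4 : X1 * x 4 = X2 * X3 + 1 := by
    have h := hr 1 4 2 3 (by norm_num) (by norm_num) (by norm_num)
    rw [h1, h2, h3] at h; linear_combination h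
  have hx0 : X3 * x 0 = X1 * X2 + 1 := by
    have h := hr 0 3 1 2 (by norm_num) (by norm_num) (by norm_num)
    rw [h1, h2, h3] at h; linear_combination h
  have hu1' : u 1 * (X1 * X2 * X3) = X1 ^ 2 * X2 + X2 * X3 ^ 2 + X1 + X3 := by
    rw [hu1, hz, hw]; field_simp [hX1, hX2, hX3]; try ring
  -- matrices
  obtain ⟨α, hαdef⟩ : ∃ a : Kf, a = X3 / X1 := ⟨_, rfl⟩
  obtain ⟨γ, hγdef⟩ : ∃ a : Kf, a = 1 / (X1 * X2) + X3 / (X1 * X1 * X2) := ⟨_, rfl⟩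
  obtain ⟨δ, hδdef⟩ : ∃ a : Kf, a = X1 / X3 + 1 / (X2 * X3) + 1 / (X1 * X2) := ⟨_, rfl⟩
  obtain ⟨α', hα'def⟩ : ∃ a : Kf, a = X1 / X3 := ⟨_, rfl⟩
  obtain ⟨γ', hγ'def⟩ : ∃ a : Kf, a = 1 / (X3 * X2) + X1 / (X3 * X3 * X2) := ⟨_, rfl⟩
  obtain ⟨δ', hδ'def⟩ : ∃ a : Kf, a = X3 / X1 + 1 / (X2 * X1) + 1 / (X3 * X2) := ⟨_, rfl⟩
  have hX123 : X1 * X2 * X3 ≠ 0 := mul_ne_zero (mul_ne_zero hX1 hX2) hX3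
  have e1 : X1 * X1⁻¹ = 1 := mul_inv_cancel₀ hX1
  have e2 : X2 * X2⁻¹ = 1 := mul_inv_cancel₀ hX2
  have e3 : X3 * X3⁻¹ = 1 := mul_inv_cancel₀ hX3
  have htr : α + δ = u 1 := by
    apply mul_right_cancel₀ hX123
    rw [hu1', hαdef, hδdef]
    simp only [div_eq_mul_inv, one_div, mul_inv]
    linear_combination (X2*X3^2)*e1 + (X1^2*X2)*e3 + (X1*X3*X3⁻¹)*e2 + X1*e3
      + (X3*X2*X2⁻¹)*e1 + X3*e2
  have hdet : α * δ - γ = 1 := by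
    rw [hαdef, hδdef, hγdef]
    simp only [div_eq_mul_inv, one_div, mul_inv]
    linear_combination (X3*X3⁻¹)*e1 + e3 + (X1⁻¹*X2⁻¹)*e3
  have htr' : α' + δ' = u 1 := by
    apply mul_right_cancel₀ hX123
    rw [hu1', hα'def, hδ'def]
    simp only [div_eq_mul_inv, one_div, mul_inv]
    linear_combination (X2*X1^2)*e3 + (X3^2*X2)*e1 + (X3*X1*X1⁻¹)*e2 + X3*e1
      + (X1*X2*X2⁻¹)*e3 + X1*e2
  have hdet' : α' * δ' - γ' = 1 := by
    rw [hα'def, hδ'def, hγ'def]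
    simp only [div_eq_mul_inv, one_div, mul_inv]
    linear_combination (X1*X1⁻¹)*e3 + e1 + (X3⁻¹*X2⁻¹)*e1
  -- the linearization  x m + x (m+4) = u 1 * x (m+2)
  have base0 : x 0 + x 4 = u 1 * x 2 := by
    apply mul_left_cancel₀ (mul_ne_zero hX1 hX3)
    rw [h2]
    linear_combination X1 * hx0 + X3 * hx4 - hu1'
  have stepF : ∀ m : ℤ, (x m + x (m+4) = u 1 * x (m+2)) →
      (x (m+1) + x (m+1+4) = u 1 * x (m+1+2)) := by
    intro m hP
    have e1 := hr (m+2) (m+1+4) (m+1+2) (m+4) (by ring) (by ring) (by ring)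
    have e0 := hr m (m+1+2) (m+1) (m+2) (by ring) (by ring) (by ring)
    apply mul_left_cancel₀ (hne (m+2))
    linear_combination e1 + x (m+1+2) * hP - e0
  have stepB : ∀ m : ℤ, (x m + x (m+4) = u 1 * x (m+2)) →
      (x (m-1) + x (m-1+4) = u 1 * x (m-1+2)) := by
    intro m hP
    have e1 := hr (m-1) (m+2) m (m-1+2) (by ring) (by ring) (by ring)
    have e2 := hr (m-1+2) (m+4) (m+2) (m-1+4) (by ring) (by ring) (by ring)
    apply mul_left_cancel₀ (hne (m+2))
    linear_combination e1 + x (m-1+2) * hP - e2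
  have Hv : ∀ m : ℤ, x m + x (m+4) = u 1 * x (m+2) := by
    intro m
    induction m using Int.induction_on with
    | zero =>
      rw [show ((0:ℤ)+4) = 4 by norm_num, show ((0:ℤ)+2) = 2 by norm_num]
      exact base0
    | succ i ih => exact stepF i ih
    | pred i ih => exact stepB (-(i:ℤ)) ih
  -- forward odd:  x (2n+1) = X1 * a_n
  have oddF : ∀ n : ℕ, ∀ m : ℤ, m = 2*(n:ℤ)+1 →
      x m = X1 * (rs α γ δ (1,0) n).1 ∧ x (m+2) = X1 * (rs α γ δ (1,0) (n+1)).1 := by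
    intro n
    induction n with
    | zero =>
      intro m hm
      have hm1 : m = 1 := by push_cast at hm; omega
      subst hm1
      constructor
      · rw [h1]; simp [rs]
      · rw [show (1:ℤ)+2 = 3 by norm_num, h3]
        simp only [rs]
        rw [hαdef]; field_simp [hX1, hX2, hX3]; try ring
    | succ k ih =>
      intro m hm
      have hm' : m - 2 = 2*(k:ℤ)+1 := by push_cast at hm ⊢; omega
      obtain ⟨ih1, ih2⟩ := ih (m-2) hm'
      rw [show m - 2 + 2 = m by ring] at ih2
      have hv := Hv (m-2)
      rw [show m - 2 + 4 = m + 2 by ring, show m - 2 + 2 = m by ring] at hv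
      have hcheb := (rs_cheb α γ δ (u 1) (1,0) htr hdet k).1
      refine ⟨ih2, ?_⟩
      show x (m+2) = X1 * (rs α γ δ (1,0) (k+2)).1
      linear_combination hv - ih1 + u 1 * ih2 - X1 * hcheb
  -- forward even:  x (2n+2) = X2 * a_n + X1⁻¹ * b_n
  have evenF : ∀ n : ℕ, ∀ m : ℤ, m = 2*(n:ℤ)+2 →
      x m = X2 * (rs α γ δ (1,0) n).1 + X1⁻¹ * (rs α γ δ (1,0) n).2 ∧
      x (m+2) = X2 * (rs α γ δ (1,0) (n+1)).1 + X1⁻¹ * (rs α γ δ (1,0) (n+1)).2 := by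
    intro n
    induction n with
    | zero =>
      intro m hm
      have hm1 : m = 2 := by push_cast at hm; omega
      subst hm1
      constructor
      · rw [h2]; simp [rs]
      · rw [show (2:ℤ)+2 = 4 by norm_num]
        simp only [rs]
        apply mul_left_cancel₀ hX1
        rw [hx4, hαdef]; field_simp [hX1, hX2, hX3]; try ring
    | succ k ih =>
      intro m hm
      have hm' : m - 2 = 2*(k:ℤ)+2 := by push_cast at hm ⊢; omega
      obtain ⟨ih1, ih2⟩ := ih (m-2) hm'
      rw [show m - 2 + 2 = m by ring] at ih2
      have hv := Hv (m-2)
      rw [show m - 2 + 4 = m + 2 by ring, show m - 2 + 2 = m by ring] at hv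
      have hc1 := (rs_cheb α γ δ (u 1) (1,0) htr hdet k).1
      have hc2 := (rs_cheb α γ δ (u 1) (1,0) htr hdet k).2
      refine ⟨ih2, ?_⟩
      show x (m+2) = X2 * (rs α γ δ (1,0) (k+2)).1 + X1⁻¹ * (rs α γ δ (1,0) (k+2)).2
      linear_combination hv - ih1 + u 1 * ih2 - X2 * hc1 - X1⁻¹ * hc2
  -- backward odd:  x (3-2n) = X3 * a'_n
  have oddB : ∀ n : ℕ, ∀ m : ℤ, m = 3-2*(n:ℤ) →
      x m = X3 * (rs α' γ' δ' (1,0) n).1 ∧ x (m-2) = X3 * (rs α' γ' δ' (1,0) (n+1)).1 := by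
    intro n
    induction n with
    | zero =>
      intro m hm
      have hm1 : m = 3 := by push_cast at hm; omega
      subst hm1
      constructor
      · rw [h3]; simp [rs]
      · rw [show (3:ℤ)-2 = 1 by norm_num, h1]
        simp only [rs]
        rw [hα'def]; field_simp [hX1, hX2, hX3]; try ring
    | succ k ih =>
      intro m hm
      have hm' : m + 2 = 3-2*(k:ℤ) := by push_cast at hm ⊢; omega
      obtain ⟨ih1, ih2⟩ := ih (m+2) hm'
      rw [show m + 2 - 2 = m by ring] at ih2
      have hv := Hv (m-2)
      rw [show m - 2 + 4 = m + 2 by ring, show m - 2 + 2 = m by ring] at hv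
      have hcheb := (rs_cheb α' γ' δ' (u 1) (1,0) htr' hdet' k).1
      refine ⟨ih2, ?_⟩
      show x (m-2) = X3 * (rs α' γ' δ' (1,0) (k+2)).1
      linear_combination hv - ih1 + u 1 * ih2 - X3 * hcheb
  -- backward even:  x (2-2n) = X2 * a'_n + X3⁻¹ * b'_n
  have evenB : ∀ n : ℕ, ∀ m : ℤ, m = 2-2*(n:ℤ) →
      x m = X2 * (rs α' γ' δ' (1,0) n).1 + X3⁻¹ * (rs α' γ' δ' (1,0) n).2 ∧
      x (m-2) = X2 * (rs α' γ' δ' (1,0) (n+1)).1 + X3⁻¹ * (rs α' γ' δ' (1,0) (n+1)).2 := by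
    intro n
    induction n with
    | zero =>
      intro m hm
      have hm1 : m = 2 := by push_cast at hm; omega
      subst hm1
      constructor
      · rw [h2]; simp [rs]
      · rw [show (2:ℤ)-2 = 0 by norm_num]
        simp only [rs]
        apply mul_left_cancel₀ hX3
        rw [show X3 * x 0 = X1 * X2 + 1 from hx0, hα'def]; field_simp [hX1, hX2, hX3]; try ring
    | succ k ih =>
      intro m hm
      have hm' : m + 2 = 2-2*(k:ℤ) := by push_cast at hm ⊢; omega
      obtain ⟨ih1, ih2⟩ := ih (m+2) hm'
      rw [show m + 2 - 2 = m by ring] at ih2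
      have hv := Hv (m-2)
      rw [show m - 2 + 4 = m + 2 by ring, show m - 2 + 2 = m by ring] at hv
      have hc1 := (rs_cheb α' γ' δ' (u 1) (1,0) htr' hdet' k).1
      have hc2 := (rs_cheb α' γ' δ' (u 1) (1,0) htr' hdet' k).2
      refine ⟨ih2, ?_⟩
      show x (m-2) = X2 * (rs α' γ' δ' (1,0) (k+2)).1 + X3⁻¹ * (rs α' γ' δ' (1,0) (k+2)).2
      linear_combination hv - ih1 + u 1 * ih2 - X2 * hc1 - X3⁻¹ * hc2
  -- the u sequence as a trace
  have uT : ∀ n : ℕ, u (n+1) = (rs α γ δ (1,0) (n+1)).1 + (rs α γ δ (0,1) (n+1)).2 ∧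
      u (n+2) = (rs α γ δ (1,0) (n+2)).1 + (rs α γ δ (0,1) (n+2)).2 := by
    intro n
    induction n with
    | zero =>
      constructor
      · simp only [rs]
        linear_combination -htr
      · rw [hu2]
        simp [rs]
        linear_combination (-(u 1) - α - δ) * htr + 2 * hdet
    | succ k ih =>
      obtain ⟨ih1, ih2⟩ := ih
      have hu : u (k+3) = u 1 * u (k+2) - u (k+1) := hurec (k+2) (by omega)
      have c1 : (rs α γ δ (1,0) (k+3)).1 = u 1 * (rs α γ δ (1,0) (k+2)).1
          - (rs α γ δ (1,0) (k+1)).1 := (rs_cheb α γ δ (u 1) (1,0) htr hdet (k+1)).1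
      have c2 : (rs α γ δ (0,1) (k+3)).2 = u 1 * (rs α γ δ (0,1) (k+2)).2
          - (rs α γ δ (0,1) (k+1)).2 := (rs_cheb α γ δ (u 1) (0,1) htr hdet (k+1)).2
      refine ⟨ih2, ?_⟩
      show u (k+3) = (rs α γ δ (1,0) (k+3)).1 + (rs α γ δ (0,1) (k+3)).2
      linear_combination hu + u 1 * ih2 - ih1 - c1 - c2
  -- memberships of matrix entries
  have hαm : α ∈ S := by
    rw [hαdef, div_eq_mul_inv]; exact hmul _ hX3m _ hX1i
  have hγm : γ ∈ S := by
    rw [hγdef, one_div, mul_inv, div_eq_mul_inv, mul_inv, mul_inv]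
    exact add_mem (hmul _ hX1i _ hX2i) (hmul _ hX3m _ (hmul _ (hmul _ hX1i _ hX1i) _ hX2i))
  have hδm : δ ∈ S := by
    rw [hδdef, div_eq_mul_inv, one_div, mul_inv, one_div, mul_inv]
    exact add_mem (add_mem (hmul _ hX1m _ hX3i) (hmul _ hX2i _ hX3i)) (hmul _ hX1i _ hX2i)
  have hα'm : α' ∈ S := by
    rw [hα'def, div_eq_mul_inv]; exact hmul _ hX1m _ hX3i
  have hγ'm : γ' ∈ S := by
    rw [hγ'def, one_div, mul_inv, div_eq_mul_inv, mul_inv, mul_inv]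
    exact add_mem (hmul _ hX3i _ hX2i) (hmul _ hX1m _ (hmul _ (hmul _ hX3i _ hX3i) _ hX2i))
  have hδ'm : δ' ∈ S := by
    rw [hδ'def, div_eq_mul_inv, one_div, mul_inv, one_div, mul_inv]
    exact add_mem (add_mem (hmul _ hX3m _ hX1i) (hmul _ hX2i _ hX1i)) (hmul _ hX3i _ hX2i)
  have memGen : ∀ (a g d : Kf), a ∈ S → g ∈ S → d ∈ S → ∀ (p : Kf × Kf), p.1 ∈ S → p.2 ∈ S →
      ∀ n : ℕ, (rs a g d p n).1 ∈ S ∧ (rs a g d p n).2 ∈ S := by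
    intro a g d ha hg hd p hp1 hp2 n
    induction n with
    | zero => exact ⟨hp1, hp2⟩
    | succ k ih =>
      constructor
      · simp only [rs]; exact add_mem (hmul _ ha _ ih.1) (hmul _ hg _ ih.2)
      · simp only [rs]; exact add_mem ih.1 (hmul _ hd _ ih.2)
  have memF := memGen α γ δ hαm hγm hδm (1,0) hone (zero_mem S)
  have memD := memGen α γ δ hαm hγm hδm (0,1) (zero_mem S) hone
  have memB := memGen α' γ' δ' hα'm hγ'm hδ'm (1,0) hone (zero_mem S)
  -- coverage of the integers
  have cover : ∀ m : ℤ, ∃ n : ℕ,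
      m = 2*(n:ℤ)+1 ∨ m = 2*(n:ℤ)+2 ∨ m = 3-2*(n:ℤ) ∨ m = 2-2*(n:ℤ) := by
    intro m
    rcases Int.even_or_odd m with ⟨k, hk⟩ | ⟨k, hk⟩
    · rcases le_or_gt 1 k with h | h
      · exact ⟨(k-1).toNat, by omega⟩
      · exact ⟨(1-k).toNat, by omega⟩
    · rcases le_or_gt 0 k with h | h
      · exact ⟨k.toNat, by omega⟩
      · exact ⟨(1-k).toNat, by omega⟩
  refine ⟨?_, ?_, ?_, ?_⟩
  · intro m
    obtain ⟨n, hn | hn | hn | hn⟩ := cover m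
    · rw [(oddF n m hn).1]; exact hmul _ hX1m _ (memF n).1
    · rw [(evenF n m hn).1]
      exact add_mem (hmul _ hX2m _ (memF n).1) (hmul _ hX1i _ (memF n).2)
    · rw [(oddB n m hn).1]; exact hmul _ hX3m _ (memB n).1
    · rw [(evenB n m hn).1]
      exact add_mem (hmul _ hX2m _ (memB n).1) (hmul _ hX3i _ (memB n).2)
  · intro n hn
    obtain ⟨k, rfl⟩ : ∃ k, n = k+1 := ⟨n-1, by omega⟩
    rw [(uT k).1]
    exact add_mem (memF (k+1)).1 (memD (k+1)).2
  · rw [hw, show (X1 + X3)/X2 = X1 * X2⁻¹ + X3 * X2⁻¹ by field_simp [hX1, hX2, hX3]; try ring]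
    exact add_mem (hmul _ hX1m _ hX2i) (hmul _ hX3m _ hX2i)
  · rw [hz, show (X1 * X2 + 1 + X2 * X3)/(X1 * X3)
        = X2 * X3⁻¹ + X1⁻¹ * X3⁻¹ + X2 * X1⁻¹ by field_simp [hX1, hX2, hX3]; try ring]
    exact add_mem (add_mem (hmul _ hX2m _ hX3i) (hmul _ hX1i _ hX3i)) (hmul _ hX2m _ hX1i)

end
end

section
/- For every integer m and every integer n ≥ 1 the identity u n · x m = x (m−2n) + x (m+2n) holds in K. -/
set_option maxHeartbeats 1000000

noncomputable section

theorem stmt11 (x : ℤ → Kf)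
    (h1 : x 1 = X1) (h2 : x 2 = X2) (h3 : x 3 = X3)
    (hne : ∀ m : ℤ, x m ≠ 0)
    (hrec : ∀ m : ℤ, x m * x (m + 3) = x (m + 1) * x (m + 2) + 1)
    (w z : Kf)
    (hw : w = (X1 + X3) / X2)
    (hz : z = (X1 * X2 + 1 + X2 * X3) / (X1 * X3))
    (u : ℕ → Kf)
    (hu0 : u 0 = 1) (hu1 : u 1 = z * w - 2) (hu2 : u 2 = (u 1) ^ 2 - 2)
    (hurec : ∀ n : ℕ, 2 ≤ n → u (n + 1) = u 1 * u n - u (n - 1)) :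
    ∀ m : ℤ, ∀ n : ℕ, 1 ≤ n →
      u n * x m = x (m - 2 * (n : ℤ)) + x (m + 2 * (n : ℤ)) := by
  have hX1 : X1 ≠ 0 := h1 ▸ hne 1
  have hX2 : X2 ≠ 0 := h2 ▸ hne 2
  have hX3 : X3 ≠ 0 := h3 ▸ hne 3
  -- cross identity: (x(m-2)+x(m+2)) x(m+1) = (x(m-1)+x(m+3)) x m
  have key : ∀ m : ℤ, (x (m-2) + x (m+2)) * x (m+1) = (x (m-1) + x (m+3)) * x m := by
    intro m
    have e1 := hrec (m-2)
    have e2 := hrec m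
    have r1 : m - 2 + 3 = m + 1 := by ring
    have r2 : m - 2 + 1 = m - 1 := by ring
    have r3 : m - 2 + 2 = m := by ring
    rw [r1, r2, r3] at e1
    linear_combination e1 - e2
  -- base: u 1 * x 2 = x 0 + x 4
  have e0 : x 0 * X3 = X1 * X2 + 1 := by
    have := hrec 0; norm_num at this; rw [h1, h2] at this; rw [← h3]; exact this
  have e4 : X1 * x 4 = X2 * X3 + 1 := by
    have := hrec 1; norm_num at this; rw [h1, h2, h3] at this; linear_combination this
  have base : u 1 * x 2 = x 0 + x 4 := by
    have hc : (X1 * X3) ≠ 0 := mul_ne_zero hX1 hX3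
    apply mul_left_cancel₀ hc
    have lhs : X1 * X3 * (u 1 * x 2) = X1^2*X2 + X1 + X3 + X2*X3^2 := by
      rw [hu1, hz, hw, h2]
      field_simp
      ring
    rw [lhs]
    have : X1 * X3 * (x 0 + x 4) = X1 * (x 0 * X3) + X3 * (X1 * x 4) := by ring
    rw [this, e0, e4]; ring
  -- n = 1 case for all m
  have L1 : ∀ m : ℤ, u 1 * x m = x (m - 2) + x (m + 2) := by
    have step : ∀ m : ℤ, (u 1 * x m = x (m-2) + x (m+2)) ↔
        (u 1 * x (m+1) = x (m-1) + x (m+3)) := by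
      intro m
      constructor
      · intro h
        apply mul_right_cancel₀ (hne m)
        rw [← key m, ← h]; ring
      · intro h
        apply mul_right_cancel₀ (hne (m+1))
        have := (key m).symm
        calc u 1 * x m * x (m+1) = (u 1 * x (m+1)) * x m := by ring
          _ = (x (m-1) + x (m+3)) * x m := by rw [h]
          _ = (x (m-2) + x (m+2)) * x (m+1) := (key m).symm
      
    have H : ∀ m : ℤ, u 1 * x (m + 2) = x (m + 2 - 2) + x (m + 2 + 2) := by
      intro m
      induction m using Int.induction_on with
      | zero => norm_num; convert base using 3 <;> norm_num
      | succ k ih =>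
        have := (step (k + 2)).mp (by convert ih using 3 <;> push_cast <;> ring)
        convert this using 3 <;> push_cast <;> ring
      | pred k ih =>
        have := (step (-(k:ℤ) - 1 + 2)).mpr (by convert ih using 3 <;> push_cast <;> ring)
        convert this using 3 <;> push_cast <;> ring
    intro m
    have := H (m - 2)
    convert this using 3 <;> ring
  -- main induction on n
  have main : ∀ n : ℕ, ∀ m : ℤ,
      u (n+1) * x m = x (m - 2 * ((n:ℤ)+1)) + x (m + 2 * ((n:ℤ)+1)) := by
    intro n
    induction n using Nat.strong_induction_on with
    | _ n ih =>
      match n with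
      | 0 => intro m; have := L1 m; convert this using 3 <;> push_cast <;> ring
      | 1 =>
        intro m
        rw [hu2]
        have h1m := L1 m
        have ha := L1 (m - 2)
        have hb := L1 (m + 2)
        have : (u 1 ^ 2 - 2) * x m = u 1 * (u 1 * x m) - 2 * x m := by ring
        rw [this, h1m, mul_add, ha, hb]
        have r1 : m - 2 - 2 = m - 2*((1:ℤ)+1) := by ring
        have r2 : m + 2 + 2 = m + 2*((1:ℤ)+1) := by ring
        have r3 : m - 2 + 2 = m := by ring
        have r4 : m + 2 - 2 = m := by ring
        rw [r1, r2, r3, r4]; ring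
      | (k+2) =>
        intro m
        have hrk := hurec (k+2) (by omega)
        have hk1 : k + 2 - 1 = k + 1 := by omega
        rw [hk1] at hrk
        rw [hrk]
        have ih2 := ih (k+1) (by omega) m
        have ih1 := ih k (by omega) m
        have ha := L1 (m - 2*((k:ℤ)+2))
        have hb := L1 (m + 2*((k:ℤ)+2))
        have expand : (u 1 * u (k+1+1) - u (k+1)) * x m
            = u 1 * (u (k+1+1) * x m) - u (k+1) * x m := by ring
        rw [expand, ih2, ih1, mul_add]
        push_cast at ha hb ⊢
        ring_nf at ha hb ⊢
        linear_combination ha + hb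
  intro m n hn
  obtain ⟨k, rfl⟩ : ∃ k, n = k + 1 := ⟨n - 1, by omega⟩
  have := main k m
  convert this using 3 <;> push_cast <;> ring
end
end

section
/- For every integer m and every integer n ≥ 0 the following straightening relation holds in K: x m · x (m+2n+3) = x (m+n+1) · x (m+n+2) + Σ_{k=0}^{n} (⌊k/2⌋ + 1) · u (n−k). -/
set_option maxHeartbeats 1000000

noncomputable section

theorem stmt12 (x : ℤ → Kf)
    (h1 : x 1 = X1) (h2 : x 2 = X2) (h3 : x 3 = X3)
    (hne : ∀ m : ℤ, x m ≠ 0)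
    (hrec : ∀ m : ℤ, x m * x (m + 3) = x (m + 1) * x (m + 2) + 1)
    (w z : Kf)
    (hw : w = (X1 + X3) / X2)
    (hz : z = (X1 * X2 + 1 + X2 * X3) / (X1 * X3))
    (u : ℕ → Kf)
    (hu0 : u 0 = 1) (hu1 : u 1 = z * w - 2) (hu2 : u 2 = (u 1) ^ 2 - 2)
    (hurec : ∀ n : ℕ, 2 ≤ n → u (n + 1) = u 1 * u n - u (n - 1)) :
    ∀ m : ℤ, ∀ n : ℕ,
      x m * x (m + 2 * (n : ℤ) + 3) =
        x (m + (n : ℤ) + 1) * x (m + (n : ℤ) + 2) +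
          ∑ k ∈ Finset.range (n + 1), ((k / 2 + 1 : ℕ) : Kf) * u (n - k) := by
  have hX1 : X1 ≠ 0 := by rw [← h1]; exact hne 1
  have hX2 : X2 ≠ 0 := by rw [← h2]; exact hne 2
  have hX3 : X3 ≠ 0 := by rw [← h3]; exact hne 3
  -- key linear recurrence with step 2
  have P : ∀ j : ℤ, x (j + 4) = u 1 * x (j + 2) - x j := by
    have base : x ((0:ℤ) + 4) = u 1 * x ((0:ℤ) + 2) - x 0 := by
      rw [show (0:ℤ)+4 = 4 by ring, show (0:ℤ)+2 = 2 by ring]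
      have hr1 := hrec 1
      rw [show (1:ℤ)+3 = 4 by ring, show (1:ℤ)+1 = 2 by ring, show (1:ℤ)+2 = 3 by ring,
        h1, h2, h3] at hr1
      have hr0 := hrec 0
      rw [show (0:ℤ)+3 = 3 by ring, show (0:ℤ)+1 = 1 by ring, show (0:ℤ)+2 = 2 by ring,
        h1, h2, h3] at hr0
      have hzw : X1*X2*X3*(z*w) = (X1*X2+1+X2*X3)*(X1+X3) := by
        rw [hz, hw]; field_simp
      rw [h2, hu1]
      apply mul_left_cancel₀ (mul_ne_zero hX1 hX3)
      linear_combination X3 * hr1 + X1 * hr0 - hzw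
    have stepf : ∀ j : ℤ, x (j + 4) = u 1 * x (j + 2) - x j →
        x (j + 5) = u 1 * x (j + 3) - x (j + 1) := by
      intro j IH
      have hA := hrec (j+2)
      rw [show j+2+3 = j+5 by ring, show j+2+1 = j+3 by ring, show j+2+2 = j+4 by ring] at hA
      have hB := hrec j
      apply mul_left_cancel₀ (hne (j+2))
      rw [hA, IH]
      linear_combination -hB
    have stepb : ∀ j : ℤ, x (j + 4) = u 1 * x (j + 2) - x j →
        x (j + 3) = u 1 * x (j + 1) - x (j - 1) := by
      intro j IH
      have hC := hrec (j+1)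
      rw [show j+1+3 = j+4 by ring, show j+1+1 = j+2 by ring, show j+1+2 = j+3 by ring] at hC
      have hD := hrec (j-1)
      rw [show j-1+3 = j+2 by ring, show j-1+1 = j by ring, show j-1+2 = j+1 by ring] at hD
      apply mul_left_cancel₀ (hne (j+2))
      linear_combination (x (j+1)) * IH - hC + hD
    intro j
    induction j using Int.induction_on with
    | zero => exact base
    | succ i ih =>
        rw [show (i:ℤ)+1+4 = (i:ℤ)+5 by ring, show (i:ℤ)+1+2 = (i:ℤ)+3 by ring]
        exact stepf i ih
    | pred i ih =>
        rw [show -(i:ℤ)-1+4 = -(i:ℤ)+3 by ring, show -(i:ℤ)-1+2 = -(i:ℤ)+1 by ring,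
          show -(i:ℤ)-1 = -(i:ℤ)-1 by ring]
        exact stepb (-(i:ℤ)) ih
  -- recurrence for the coefficient sums
  have hS : ∀ n : ℕ,
      (∑ k ∈ Finset.range (n+2+1), ((k / 2 + 1 : ℕ) : Kf) * u (n+2-k))
        = u 1 * (∑ k ∈ Finset.range (n+1+1), ((k / 2 + 1 : ℕ) : Kf) * u (n+1-k))
          - (∑ k ∈ Finset.range (n+1), ((k / 2 + 1 : ℕ) : Kf) * u (n-k)) + 1 := by
    intro n
    have L1 : (∑ k ∈ Finset.range (n+2+1), ((k / 2 + 1 : ℕ) : Kf) * u (n+2-k))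
        = (∑ k ∈ Finset.range n, ((k / 2 + 1 : ℕ) : Kf) * u (n+2-k))
          + ((n / 2 + 1 : ℕ) : Kf) * u (n+2-n)
          + (((n+1) / 2 + 1 : ℕ) : Kf) * u (n+2-(n+1))
          + (((n+2) / 2 + 1 : ℕ) : Kf) * u (n+2-(n+2)) := by
      rw [Finset.sum_range_succ, Finset.sum_range_succ, Finset.sum_range_succ]
    have L2 : (∑ k ∈ Finset.range (n+1+1), ((k / 2 + 1 : ℕ) : Kf) * u (n+1-k))
        = (∑ k ∈ Finset.range n, ((k / 2 + 1 : ℕ) : Kf) * u (n+1-k))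
          + ((n / 2 + 1 : ℕ) : Kf) * u (n+1-n)
          + (((n+1) / 2 + 1 : ℕ) : Kf) * u (n+1-(n+1)) := by
      rw [Finset.sum_range_succ, Finset.sum_range_succ]
    have L3 : (∑ k ∈ Finset.range (n+1), ((k / 2 + 1 : ℕ) : Kf) * u (n-k))
        = (∑ k ∈ Finset.range n, ((k / 2 + 1 : ℕ) : Kf) * u (n-k))
          + ((n / 2 + 1 : ℕ) : Kf) * u (n-n) := by
      rw [Finset.sum_range_succ]
    have L4 : (∑ k ∈ Finset.range n, ((k / 2 + 1 : ℕ) : Kf) * u (n+2-k))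
        = ∑ k ∈ Finset.range n,
            (u 1 * (((k / 2 + 1 : ℕ) : Kf) * u (n+1-k)) - ((k / 2 + 1 : ℕ) : Kf) * u (n-k)) := by
      apply Finset.sum_congr rfl
      intro k hk
      have hk' : k < n := Finset.mem_range.mp hk
      have h2' : 2 ≤ n + 1 - k := by omega
      have hu := hurec (n+1-k) h2'
      rw [show n+1-k+1 = n+2-k by omega, show n+1-k-1 = n-k by omega] at hu
      rw [hu]; ring
    rw [L1, L2, L3, L4, Finset.sum_sub_distrib, ← Finset.mul_sum,
      show n+2-n = 2 by omega, show n+2-(n+1) = 1 by omega, show n+2-(n+2) = 0 by omega,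
      show n+1-n = 1 by omega, show n+1-(n+1) = 0 by omega, show n-n = 0 by omega,
      show (n+2)/2+1 = (n/2+1)+1 by omega, hu0, hu2,
      show (((n/2+1)+1 : ℕ) : Kf) = ((n/2+1 : ℕ) : Kf) + 1 from Nat.cast_succ (n/2+1)]
    ring
  -- now the main two-step induction
  suffices h : ∀ n : ℕ, (∀ m : ℤ,
      x m * x (m + 2 * (n : ℤ) + 3) =
        x (m + (n : ℤ) + 1) * x (m + (n : ℤ) + 2) +
          ∑ k ∈ Finset.range (n + 1), ((k / 2 + 1 : ℕ) : Kf) * u (n - k)) ∧ (∀ m : ℤ,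
      x m * x (m + 2 * ((n+1 : ℕ) : ℤ) + 3) =
        x (m + ((n+1 : ℕ) : ℤ) + 1) * x (m + ((n+1 : ℕ) : ℤ) + 2) +
          ∑ k ∈ Finset.range ((n+1) + 1), ((k / 2 + 1 : ℕ) : Kf) * u ((n+1) - k)) by
    intro m n
    exact (h n).1 m
  have base0 : ∀ m : ℤ,
      x m * x (m + 2 * ((0:ℕ) : ℤ) + 3) =
        x (m + ((0:ℕ) : ℤ) + 1) * x (m + ((0:ℕ) : ℤ) + 2) +
          ∑ k ∈ Finset.range (0 + 1), ((k / 2 + 1 : ℕ) : Kf) * u (0 - k) := by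
    intro m
    rw [show ((0:ℕ):ℤ) = 0 by norm_num, show m + 2*(0:ℤ) + 3 = m + 3 by ring,
      show m + (0:ℤ) + 1 = m + 1 by ring, show m + (0:ℤ) + 2 = m + 2 by ring,
      Finset.sum_range_one, show (0-0 : ℕ) = 0 from rfl, show (0/2+1 : ℕ) = 1 from rfl,
      Nat.cast_one, hu0]
    linear_combination hrec m
  have base1 : ∀ m : ℤ,
      x m * x (m + 2 * ((1:ℕ) : ℤ) + 3) =
        x (m + ((1:ℕ) : ℤ) + 1) * x (m + ((1:ℕ) : ℤ) + 2) +
          ∑ k ∈ Finset.range (1 + 1), ((k / 2 + 1 : ℕ) : Kf) * u (1 - k) := by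
    intro m
    rw [show ((1:ℕ):ℤ) = 1 by norm_num, show m + 2*(1:ℤ) + 3 = m + 5 by ring,
      show m + (1:ℤ) + 1 = m + 2 by ring, show m + (1:ℤ) + 2 = m + 3 by ring,
      Finset.sum_range_succ, Finset.sum_range_one,
      show (1-0 : ℕ) = 1 from rfl, show (1-1 : ℕ) = 0 from rfl,
      show (0/2+1 : ℕ) = 1 from rfl,
      Nat.cast_one, hu0]
    have hA := hrec (m+2)
    rw [show m+2+3 = m+5 by ring, show m+2+1 = m+3 by ring, show m+2+2 = m+4 by ring] at hA
    have hB := hrec m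
    have hC := hrec (m+1)
    rw [show m+1+3 = m+4 by ring, show m+1+1 = m+2 by ring, show m+1+2 = m+3 by ring] at hC
    have hP := P m
    apply mul_left_cancel₀ (hne (m+2))
    linear_combination (x m) * hA + (x (m+4)) * hB + (x (m+2)) * hC + hP
  intro n
  induction n with
  | zero => exact ⟨base0, base1⟩
  | succ k ih =>
    refine ⟨ih.2, ?_⟩
    intro m
    rw [show (((k+1+1 : ℕ)) : ℤ) = (k:ℤ) + 2 by push_cast; ring]
    rw [show m + 2*((k:ℤ)+2) + 3 = m + 2*(k:ℤ) + 7 by ring,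
      show m + ((k:ℤ)+2) + 1 = m + (k:ℤ) + 3 by ring,
      show m + ((k:ℤ)+2) + 2 = m + (k:ℤ) + 4 by ring,
      hS k]
    have hih1 := ih.1 m
    have hih2 := ih.2 m
    rw [show (((k+1 : ℕ)) : ℤ) = (k:ℤ) + 1 by push_cast; ring,
      show m + 2*((k:ℤ)+1) + 3 = m + 2*(k:ℤ) + 5 by ring,
      show m + ((k:ℤ)+1) + 1 = m + (k:ℤ) + 2 by ring,
      show m + ((k:ℤ)+1) + 2 = m + (k:ℤ) + 3 by ring] at hih2
    have hP1 := P (m + 2*(k:ℤ) + 3)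
    rw [show m + 2*(k:ℤ) + 3 + 4 = m + 2*(k:ℤ) + 7 by ring,
      show m + 2*(k:ℤ) + 3 + 2 = m + 2*(k:ℤ) + 5 by ring] at hP1
    have hP2 := P (m + (k:ℤ))
    rw [show m + (k:ℤ) + 4 = m + (k:ℤ) + 4 by ring] at hP2
    have hE := hrec (m + (k:ℤ))
    linear_combination (x m) * hP1 + u 1 * hih2 - hih1 - (x (m + (k:ℤ) + 3)) * hP2 + hE
end
end
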